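/- Fidelity is monotone under partial trace: for density matrices ρ, σ on H_A ⊗ H_B (finite-dimensional), F(ρ,σ) ≤ F(Tr_B ρ, Tr_B σ). -/

import Mathlib

open Matrix
open scoped ComplexOrder

open Classical in
/-- Square root of a positive semidefinite matrix (junk value `0` otherwise). -/
noncomputable def msqrt {n : Type*} [Fintype n] [DecidableEq n] (A : Matrix n n ℂ) :
    Matrix n n ℂ :=
  if h : A.PosSemidef then
    (h.1.eigenvectorUnitary : Matrix n n ℂ) * diagonal ((↑) ∘ (√·) ∘ h.1.eigenvalues) *
      (star h.1.eigenvectorUnitary : Matrix n n ℂ)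
  else 0

/-- Fidelity `F(ρ,σ) = (tr √(√ρ σ √ρ))²`. -/
noncomputable def fid {n : Type*} [Fintype n] [DecidableEq n] (ρ σ : Matrix n n ℂ) : ℝ :=
  ((msqrt (msqrt ρ * σ * msqrt ρ)).trace).re ^ 2

/-- Partial trace over the second tensor factor. -/
noncomputable def ptraceSnd {a b : Type*} [Fintype b]
    (A : Matrix (a × b) (a × b) ℂ) : Matrix a a ℂ :=
  Matrix.of fun i j => ∑ y : b, A (i, y) (j, y)

/-!
Alberti's variational formula `F(ρ, σ) = inf_{M > 0} tr(M ρ) · tr(M⁻¹ σ)` does the work.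
The bound `F ≤ tr(M ρ) · tr(M⁻¹ σ)` is Cauchy–Schwarz for the inner product `tr(Y B⁻¹ Xᴴ)`
with `B = √ρ M √ρ + δ`. Conversely, for invertible `ρ` the infimum is attained at
`ρ^{-1/2} √(√ρ σ √ρ) ρ^{-1/2}`; replacing `√ρ` by `√ρ + c²` and `√(√ρ σ √ρ)` by
`√(√ρ σ √ρ) + c` gives matrices whose value tends to `F` as `c → 0`, also for singular `ρ`.
Since `tr((M ⊗ 1) ρ) = tr(M Tr_B ρ)` and `(M ⊗ 1)⁻¹ = M⁻¹ ⊗ 1`, the infimum for `ρ, σ` taken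
over the matrices `M ⊗ 1` alone is the infimum for `Tr_B ρ, Tr_B σ`.
-/

open scoped MatrixOrder Kronecker

lemma le_of_forall_pos_le_of_continuous {f : ℝ → ℝ} (hf : Continuous f) {x : ℝ}
    (h : ∀ δ, 0 < δ → x ≤ f δ) : x ≤ f 0 :=
  ge_of_tendsto (hf.tendsto 0 |>.mono_left nhdsWithin_le_nhds)
    (eventually_nhdsWithin_of_forall (s := Set.Ioi 0) h)

section TraceInequalities

variable {n : Type*} [Fintype n]

lemma re_trace_mul_nonneg {A B : Matrix n n ℂ} (hA : A.PosSemidef) (hB : B.PosSemidef) :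
    0 ≤ (A * B).trace.re := by
  classical
  obtain ⟨C, rfl⟩ := CStarAlgebra.nonneg_iff_eq_star_mul_self.mp hA.nonneg
  rw [Matrix.mul_assoc, trace_mul_comm, Matrix.mul_assoc, star_eq_conjTranspose,
    ← Matrix.mul_assoc]
  exact (Complex.nonneg_iff.mp (hB.mul_mul_conjTranspose_same C).trace_nonneg).1

lemma re_trace_mul_le_re_trace_mul {A X Y : Matrix n n ℂ} (hA : A.PosSemidef) (hXY : X ≤ Y) :
    (A * X).trace.re ≤ (A * Y).trace.re := by
  have := re_trace_mul_nonneg hA hXY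
  rwa [Matrix.mul_sub, trace_sub, Complex.sub_re, sub_nonneg] at this

lemma sq_re_trace_mul_le {W : Matrix n n ℂ} (hW : W.PosSemidef) (X Y : Matrix n n ℂ) :
    (Y * W * Xᴴ).trace.re ^ 2 ≤ (X * W * Xᴴ).trace.re * (Y * W * Yᴴ).trace.re := by
  let _ := W.toMatrixSeminormedAddCommGroup hW
  let _ := W.toMatrixInnerProductSpace hW
  have h := inner_mul_inner_self_le (𝕜 := ℂ) X Y
  change ‖(Y * W * Xᴴ).trace‖ * ‖(X * W * Yᴴ).trace‖ ≤ _ at h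
  have hconj : (X * W * Yᴴ).trace = star (Y * W * Xᴴ).trace := by
    rw [← trace_conjTranspose]
    simp only [conjTranspose_mul, conjTranspose_conjTranspose, hW.isHermitian.eq,
      Matrix.mul_assoc]
  rw [hconj, norm_star, ← sq] at h
  exact (sq_le_sq.mpr (by simpa using Complex.abs_re_le_norm _)).trans h

end TraceInequalities

section Fidelity

variable {n : Type*} [Fintype n] [DecidableEq n]

lemma msqrt_eq_cfcSqrt {A : Matrix n n ℂ} (hA : A.PosSemidef) : msqrt A = CFC.sqrt A := by
  rw [msqrt, dif_pos hA, CFC.sqrt_eq_cfc, cfc_nnreal_eq_real _ A, hA.1.cfc_eq]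
  simp only [IsHermitian.cfc, Unitary.conjStarAlgAut_apply]
  congr 3
  funext i
  simp [max_eq_left (hA.eigenvalues_nonneg i)]

lemma posSemidef_msqrt {A : Matrix n n ℂ} (hA : A.PosSemidef) : (msqrt A).PosSemidef := by
  rw [msqrt_eq_cfcSqrt hA]
  exact (CFC.sqrt_nonneg A).posSemidef

lemma msqrt_mul_msqrt {A : Matrix n n ℂ} (hA : A.PosSemidef) : msqrt A * msqrt A = A := by
  rw [msqrt_eq_cfcSqrt hA]
  exact CFC.sqrt_mul_sqrt_self A hA.nonneg

noncomputable def rootFid (ρ σ : Matrix n n ℂ) : ℝ :=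
  (msqrt (msqrt ρ * σ * msqrt ρ)).trace.re

lemma fid_eq_rootFid_sq (ρ σ : Matrix n n ℂ) : fid ρ σ = rootFid ρ σ ^ 2 := rfl

lemma mul_inv_mul_le_inv {M P : Matrix n n ℂ} (hM : M.PosDef) (hP : P.IsHermitian) {δ : ℝ}
    (hδ : 0 < δ) : P * (P * M * P + δ • 1)⁻¹ * P ≤ M⁻¹ := by
  set R := P * M * P + δ • (1 : Matrix n n ℂ)
  set L := M * (P * P) * M + δ • M
  have hR : R.PosDef := PosDef.posSemidef_add
    (hP.isSelfAdjoint.conjugate_nonneg hM.posSemidef.nonneg).posSemidef (PosDef.one.smul hδ)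
  have hL : L.PosDef := PosDef.posSemidef_add
    (hM.isHermitian.isSelfAdjoint.conjugate_nonneg hP.isSelfAdjoint.mul_self_nonneg).posSemidef
    (hM.smul hδ)
  have hRu : IsUnit R.det := (isUnit_iff_isUnit_det R).mp hR.isUnit
  have hMu : IsUnit M.det := (isUnit_iff_isUnit_det M).mp hM.isUnit
  have hLu : IsUnit L.det := (isUnit_iff_isUnit_det L).mp hL.isUnit
  have hLP : L * P = M * P * R := by
    simp only [R, L, Matrix.add_mul, Matrix.mul_add, Matrix.smul_mul, Matrix.mul_smul,
      Matrix.mul_one, Matrix.mul_assoc]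
  have hLM : L * M⁻¹ = M * (P * P) + δ • 1 := by
    simp only [L, Matrix.add_mul, Matrix.smul_mul, mul_nonsing_inv_cancel_right _ _ hMu,
      mul_nonsing_inv _ hMu]
  have hkey : M⁻¹ - P * R⁻¹ * P = δ • L⁻¹ := by
    calc M⁻¹ - P * R⁻¹ * P = L⁻¹ * (L * M⁻¹ - L * P * R⁻¹ * P) := by
          rw [Matrix.mul_sub, nonsing_inv_mul_cancel_left _ _ hLu, Matrix.mul_assoc L,
            Matrix.mul_assoc L, nonsing_inv_mul_cancel_left _ _ hLu, Matrix.mul_assoc]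
      _ = δ • L⁻¹ := by
          rw [hLM, hLP, mul_nonsing_inv_cancel_right _ _ hRu]
          simp only [Matrix.mul_assoc, add_sub_cancel_left, Matrix.mul_smul, Matrix.mul_one]
  rw [le_iff, hkey]
  exact hL.inv.posSemidef.smul hδ.le

theorem fid_le_re_trace_mul_mul_re_trace_inv_mul {ρ σ M : Matrix n n ℂ} (hρ : ρ.PosSemidef)
    (hσ : σ.PosSemidef) (hM : M.PosDef) :
    fid ρ σ ≤ (M * ρ).trace.re * (M⁻¹ * σ).trace.re := by
  set P := msqrt ρ
  have hP := posSemidef_msqrt hρ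
  have hPσP := (conjugate_nonneg_of_nonneg hσ.nonneg hP.nonneg).posSemidef
  set N := msqrt (P * σ * P)
  have hN := posSemidef_msqrt hPσP
  have hbound : ∀ δ : ℝ, 0 < δ →
      fid ρ σ ≤ ((M * ρ).trace.re + δ * Fintype.card n) * (M⁻¹ * σ).trace.re := by
    intro δ hδ
    set B := P * M * P + δ • (1 : Matrix n n ℂ)
    have hB : B.PosDef := PosDef.posSemidef_add
      (conjugate_nonneg_of_nonneg hM.posSemidef.nonneg hP.nonneg).posSemidef (PosDef.one.smul hδ)
    have hBu : IsUnit B.det := (isUnit_iff_isUnit_det B).mp hB.isUnit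
    -- Cauchy–Schwarz for `⟪X, Y⟫ = tr (Y B⁻¹ Xᴴ)` at `X = B`, `Y = N`
    have hcs := sq_re_trace_mul_le hB.inv.posSemidef B N
    rw [hB.isHermitian.eq, hN.isHermitian.eq, nonsing_inv_mul_cancel_right _ _ hBu,
      nonsing_inv_mul_cancel_right _ _ hBu] at hcs
    have htrB : B.trace.re = (M * ρ).trace.re + δ * Fintype.card n := by
      rw [trace_add, trace_mul_cycle, msqrt_mul_msqrt hρ, trace_mul_comm, trace_smul, trace_one]
      simp
    have htrN : (N * B⁻¹ * N).trace.re ≤ (M⁻¹ * σ).trace.re := by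
      have h := re_trace_mul_le_re_trace_mul hσ (mul_inv_mul_le_inv hM hP.isHermitian hδ)
      have e : (N * B⁻¹ * N).trace = (σ * (P * B⁻¹ * P)).trace := by
        rw [trace_mul_cycle, msqrt_mul_msqrt hPσP, Matrix.mul_assoc, trace_mul_comm,
          ← Matrix.mul_assoc, trace_mul_comm]
      rwa [e, trace_mul_comm M⁻¹]
    calc fid ρ σ = N.trace.re ^ 2 := rfl
      _ ≤ B.trace.re * (N * B⁻¹ * N).trace.re := hcs
      _ ≤ _ := by
        rw [htrB]
        have := re_trace_mul_nonneg hM.posSemidef hρ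
        gcongr
  simpa using le_of_forall_pos_le_of_continuous (by fun_prop) hbound

lemma inv_add_smul_one_mul_add_smul_inv {N : Matrix n n ℂ} (hN : N.PosSemidef) {c : ℝ}
    (hc : 0 < c) : (N + c • 1)⁻¹ * N + c • (N + c • 1)⁻¹ = 1 := by
  have hE : (N + c • (1 : Matrix n n ℂ)).PosDef := PosDef.posSemidef_add hN (PosDef.one.smul hc)
  rw [← Matrix.mul_one (N + c • 1)⁻¹, Matrix.mul_assoc, Matrix.one_mul, ← Matrix.mul_smul,
    ← Matrix.mul_add, nonsing_inv_mul _ ((isUnit_iff_isUnit_det _).mp hE.isUnit)]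

lemma posSemidef_inv_add_smul_one_mul {N : Matrix n n ℂ} (hN : N.PosSemidef) {c : ℝ}
    (hc : 0 < c) : ((N + c • 1)⁻¹ * N).PosSemidef := by
  set E := N + c • (1 : Matrix n n ℂ)
  have hE : E.PosDef := PosDef.posSemidef_add hN (PosDef.one.smul hc)
  have hNE : (N * E).PosSemidef := by
    rw [Matrix.mul_add, Matrix.mul_smul, Matrix.mul_one]
    exact hN.isHermitian.isSelfAdjoint.mul_self_nonneg.posSemidef.add (hN.smul hc.le)
  have h := (conjugate_nonneg_of_nonneg hNE.nonneg hE.inv.posSemidef.nonneg).posSemidef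
  rwa [← Matrix.mul_assoc,
    mul_nonsing_inv_cancel_right _ _ ((isUnit_iff_isUnit_det _).mp hE.isUnit)] at h

lemma re_trace_inv_add_smul_one_mul_mul_self_le {N : Matrix n n ℂ} (hN : N.PosSemidef) {c : ℝ}
    (hc : 0 < c) : ((N + c • 1)⁻¹ * (N * N)).trace.re ≤ N.trace.re := by
  have hE : (N + c • (1 : Matrix n n ℂ)).PosDef := PosDef.posSemidef_add hN (PosDef.one.smul hc)
  have h := mul_nonneg hc.le (re_trace_mul_nonneg hE.inv.posSemidef hN)
  have hsplit : N = (N + c • 1)⁻¹ * (N * N) + c • ((N + c • 1)⁻¹ * N) := by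
    calc N = ((N + c • 1)⁻¹ * N + c • (N + c • 1)⁻¹) * N := by
          rw [inv_add_smul_one_mul_add_smul_inv hN hc, Matrix.one_mul]
      _ = _ := by rw [Matrix.add_mul, Matrix.smul_mul, Matrix.mul_assoc]
  have htr := congrArg (fun A => A.trace.re) hsplit
  simp only [trace_add, trace_smul, Complex.add_re, Complex.smul_re, smul_eq_mul] at htr
  linarith

lemma mul_re_trace_inv_add_smul_one_mul_le {N σ : Matrix n n ℂ} (hN : N.PosSemidef)
    (hσ : σ.PosSemidef) {c : ℝ} (hc : 0 < c) :
    c * ((N + c • 1)⁻¹ * σ).trace.re ≤ σ.trace.re := by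
  have hle : c • (N + c • 1)⁻¹ ≤ 1 := by
    rw [le_iff, ← eq_sub_of_add_eq (inv_add_smul_one_mul_add_smul_inv hN hc)]
    exact posSemidef_inv_add_smul_one_mul hN hc
  have h := re_trace_mul_le_re_trace_mul hσ hle
  rwa [Matrix.mul_one, Matrix.mul_smul, trace_smul, Complex.smul_re, trace_mul_comm] at h

lemma re_trace_inv_mul_mul_inv_mul_le {D E ρ : Matrix n n ℂ} (hD : D.PosDef) (hE : E.PosSemidef)
    (hρD : ρ ≤ D * D) : (D⁻¹ * E * D⁻¹ * ρ).trace.re ≤ E.trace.re := by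
  have hDu : IsUnit D.det := (isUnit_iff_isUnit_det D).mp hD.isUnit
  have hle : D⁻¹ * ρ * D⁻¹ ≤ 1 := by
    have h := hD.inv.isHermitian.isSelfAdjoint.conjugate_le_conjugate hρD
    rwa [← Matrix.mul_assoc, nonsing_inv_mul _ hDu, Matrix.one_mul, mul_nonsing_inv _ hDu] at h
  have h := re_trace_mul_le_re_trace_mul hE hle
  rwa [Matrix.mul_one, ← Matrix.mul_assoc, ← Matrix.mul_assoc, trace_mul_cycle,
    ← Matrix.mul_assoc] at h

lemma mul_self_le_add_smul_one_mul_self {P : Matrix n n ℂ} (hP : P.PosSemidef) {t : ℝ}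
    (ht : 0 ≤ t) : P * P ≤ (P + t • 1) * (P + t • 1) := by
  have h : (P + t • 1) * (P + t • 1) - P * P = (2 * t) • P + (t ^ 2) • 1 := by
    simp only [Matrix.add_mul, Matrix.mul_add, Matrix.smul_mul, Matrix.mul_smul, Matrix.one_mul,
      Matrix.mul_one]
    match_scalars <;> ring
  rw [le_iff, h]
  exact (hP.smul (by positivity)).add (PosSemidef.one.smul (by positivity))

lemma add_sq_smul_one_conjugate_le {P σ : Matrix n n ℂ} (hP : P.IsHermitian)
    (hσ : σ.PosSemidef) {c : ℝ} (hc : 0 ≤ c) :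
    (P + c ^ 2 • 1) * σ * (P + c ^ 2 • 1) ≤ (1 + c) • (P * σ * P) + (c ^ 3 + c ^ 4) • σ := by
  have h : (1 + c) • (P * σ * P) + (c ^ 3 + c ^ 4) • σ - (P + c ^ 2 • 1) * σ * (P + c ^ 2 • 1) =
      c • ((P - c • 1) * σ * (P - c • 1)) := by
    simp only [Matrix.add_mul, Matrix.mul_add, Matrix.sub_mul, Matrix.mul_sub, Matrix.smul_mul,
      Matrix.mul_smul, Matrix.one_mul, Matrix.mul_one]
    match_scalars <;> ring
  have hPc : (P - c • 1).IsHermitian := hP.sub (isHermitian_one.smul (.all c))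
  rw [le_iff, h]
  exact (hPc.isSelfAdjoint.conjugate_nonneg hσ.nonneg).posSemidef.smul hc

lemma re_trace_conjugate_inv_add_smul_one_mul_le {P σ N : Matrix n n ℂ} (hP : P.IsHermitian)
    (hσ : σ.PosSemidef) (hN : N.PosSemidef) (hNN : N * N = P * σ * P) {c : ℝ} (hc : 0 < c) :
    ((P + c ^ 2 • 1) * (N + c • 1)⁻¹ * (P + c ^ 2 • 1) * σ).trace.re ≤
      (1 + c) * N.trace.re + (c ^ 2 + c ^ 3) * σ.trace.re := by
  set D := P + c ^ 2 • (1 : Matrix n n ℂ)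
  set E := N + c • (1 : Matrix n n ℂ)
  have hE : E.PosDef := PosDef.posSemidef_add hN (PosDef.one.smul hc)
  have hcyc : (D * E⁻¹ * D * σ).trace = (E⁻¹ * (D * σ * D)).trace := by
    rw [Matrix.mul_assoc (D * E⁻¹), trace_mul_comm, ← Matrix.mul_assoc, trace_mul_comm]
  have hconj :=
    re_trace_mul_le_re_trace_mul hE.inv.posSemidef (add_sq_smul_one_conjugate_le hP hσ hc.le)
  have hsplit : (E⁻¹ * ((1 + c) • (P * σ * P) + (c ^ 3 + c ^ 4) • σ)).trace.re =
      (1 + c) * (E⁻¹ * (N * N)).trace.re + (c ^ 3 + c ^ 4) * (E⁻¹ * σ).trace.re := by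
    simp only [← hNN, Matrix.mul_add, Matrix.mul_smul, trace_add, trace_smul, Complex.add_re,
      Complex.smul_re, smul_eq_mul]
  have hNN := mul_le_mul_of_nonneg_left (re_trace_inv_add_smul_one_mul_mul_self_le hN hc)
    (by positivity : 0 ≤ 1 + c)
  have hσ := mul_le_mul_of_nonneg_left (mul_re_trace_inv_add_smul_one_mul_le hN hσ hc)
    (by positivity : 0 ≤ c ^ 2 + c ^ 3)
  rw [hcyc]
  linarith

lemma exists_posDef_re_trace_mul_le {ρ σ : Matrix n n ℂ} (hρ : ρ.PosSemidef)
    (hσ : σ.PosSemidef) {c : ℝ} (hc : 0 < c) :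
    ∃ M : Matrix n n ℂ, M.PosDef ∧ (M * ρ).trace.re ≤ rootFid ρ σ + c * Fintype.card n ∧
      (M⁻¹ * σ).trace.re ≤ (1 + c) * rootFid ρ σ + (c ^ 2 + c ^ 3) * σ.trace.re := by
  set P := msqrt ρ
  have hP := posSemidef_msqrt hρ
  have hPσP := (conjugate_nonneg_of_nonneg hσ.nonneg hP.nonneg).posSemidef
  set N := msqrt (P * σ * P)
  have hN := posSemidef_msqrt hPσP
  set D := P + c ^ 2 • (1 : Matrix n n ℂ)
  set E := N + c • (1 : Matrix n n ℂ)
  have hD : D.PosDef := PosDef.posSemidef_add hP (PosDef.one.smul (by positivity))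
  have hE : E.PosDef := PosDef.posSemidef_add hN (PosDef.one.smul hc)
  have hDu : IsUnit D.det := (isUnit_iff_isUnit_det D).mp hD.isUnit
  refine ⟨D⁻¹ * E * D⁻¹, ?_, ?_, ?_⟩
  · have h := hE.conjTranspose_mul_mul_same (mulVec_injective_of_isUnit hD.inv.isUnit)
    rwa [hD.inv.isHermitian.eq] at h
  · have hρD : ρ ≤ D * D :=
      msqrt_mul_msqrt hρ ▸ mul_self_le_add_smul_one_mul_self hP (by positivity)
    have h := re_trace_inv_mul_mul_inv_mul_le hD hE.posSemidef hρD
    simpa [E, rootFid, trace_add, trace_smul] using h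
  · rw [Matrix.mul_inv_rev, Matrix.mul_inv_rev, nonsing_inv_nonsing_inv _ hDu,
      ← Matrix.mul_assoc]
    exact re_trace_conjugate_inv_add_smul_one_mul_le hP.isHermitian hσ hN
      (msqrt_mul_msqrt hPσP) hc

theorem exists_posDef_re_trace_mul_mul_lt {ρ σ : Matrix n n ℂ} (hρ : ρ.PosSemidef)
    (hσ : σ.PosSemidef) {ε : ℝ} (hε : 0 < ε) :
    ∃ M : Matrix n n ℂ, M.PosDef ∧ (M * ρ).trace.re * (M⁻¹ * σ).trace.re < fid ρ σ + ε := by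
  set T := rootFid ρ σ
  let g : ℝ → ℝ := fun c ↦
    (T + c * Fintype.card n) * ((1 + c) * T + (c ^ 2 + c ^ 3) * σ.trace.re)
  have hg : Filter.Tendsto g (nhdsWithin 0 (Set.Ioi 0)) (nhds (fid ρ σ)) := by
    have h : g 0 = fid ρ σ := by simp [g, T, fid_eq_rootFid_sq, sq]
    exact h ▸ ((by fun_prop : Continuous g).tendsto 0).mono_left nhdsWithin_le_nhds
  obtain ⟨c, hgc, hc⟩ := ((hg.eventually (gt_mem_nhds (lt_add_of_pos_right _ hε))).and
    self_mem_nhdsWithin).exists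
  obtain ⟨M, hM, hρM, hσM⟩ := exists_posDef_re_trace_mul_le hρ hσ hc
  refine ⟨M, hM, lt_of_le_of_lt ?_ hgc⟩
  exact mul_le_mul hρM hσM (re_trace_mul_nonneg hM.inv.posSemidef hσ)
    ((re_trace_mul_nonneg hM.posSemidef hρ).trans hρM)

end Fidelity

section PartialTrace

variable {a b : Type*} [Fintype b]

lemma ptraceSnd_eq_sum_submatrix (A : Matrix (a × b) (a × b) ℂ) :
    ptraceSnd A = ∑ y : b, A.submatrix (·, y) (·, y) := by
  ext i j
  simp [ptraceSnd, Matrix.sum_apply]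

lemma Matrix.PosSemidef.ptraceSnd {A : Matrix (a × b) (a × b) ℂ} (hA : A.PosSemidef) :
    (ptraceSnd A).PosSemidef := by
  rw [ptraceSnd_eq_sum_submatrix]
  exact posSemidef_sum _ fun y _ ↦ hA.submatrix _

lemma trace_kronecker_one_mul [Fintype a] [DecidableEq b] (M : Matrix a a ℂ)
    (A : Matrix (a × b) (a × b) ℂ) :
    ((M ⊗ₖ (1 : Matrix b b ℂ)) * A).trace = (M * ptraceSnd A).trace := by
  simp only [trace, diag, mul_apply, kroneckerMap_apply, one_apply, ptraceSnd, of_apply,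
    Fintype.sum_prod_type, Finset.mul_sum, mul_ite, mul_one, mul_zero, ite_mul, zero_mul,
    Finset.sum_ite_eq, Finset.mem_univ, if_true]
  exact Finset.sum_congr rfl fun i _ ↦ Finset.sum_comm

end PartialTrace

theorem fidelity_le_fidelity_ptrace_general {a b : Type*}
    [Fintype a] [DecidableEq a] [Fintype b] [DecidableEq b]
    (ρ σ : Matrix (a × b) (a × b) ℂ)
    (hρ : ρ.PosSemidef)
    (hσ : σ.PosSemidef) :
    fid ρ σ ≤ fid (ptraceSnd ρ) (ptraceSnd σ) := by
  refine le_of_forall_pos_lt_add fun ε hε ↦ ?_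
  obtain ⟨M, hM, hMε⟩ := exists_posDef_re_trace_mul_mul_lt hρ.ptraceSnd hσ.ptraceSnd hε
  calc fid ρ σ ≤ ((M ⊗ₖ 1) * ρ).trace.re * ((M ⊗ₖ 1)⁻¹ * σ).trace.re :=
        fid_le_re_trace_mul_mul_re_trace_inv_mul hρ hσ (hM.kronecker PosDef.one)
    _ = (M * ptraceSnd ρ).trace.re * (M⁻¹ * ptraceSnd σ).trace.re := by
        rw [inv_kronecker, inv_one, trace_kronecker_one_mul, trace_kronecker_one_mul]
    _ < fid (ptraceSnd ρ) (ptraceSnd σ) + ε := hMε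

/-- fidelity is monotone under partial trace:
`F(ρ,σ) ≤ F(Tr_B ρ, Tr_B σ)`. -/
theorem fidelity_le_fidelity_ptrace {a b : Type*}
    [Fintype a] [DecidableEq a] [Fintype b] [DecidableEq b]
    (ρ σ : Matrix (a × b) (a × b) ℂ)
    (hρ : ρ.PosSemidef) (hρt : ρ.trace = 1)
    (hσ : σ.PosSemidef) (hσt : σ.trace = 1) :
    fid ρ σ ≤ fid (ptraceSnd ρ) (ptraceSnd σ) :=
  fidelity_le_fidelity_ptrace_general ρ σ hρ hσ
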